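/- Let M = M₁ × M₂ over R = R₁ × R₂ and S = S₁ × S₂. Then P₁ is a graded classical S₁-primary submodule of M₁ if and only if P₁ × M₂ is a graded classical S-primary submodule of M. -/

import Mathlib

section ProdModule

variable {R₁ R₂ M₁ M₂ : Type*} [CommRing R₁] [CommRing R₂]
  [AddCommGroup M₁] [AddCommGroup M₂] [Module R₁ M₁] [Module R₂ M₂]

/-- The componentwise scalar action of `R₁ × R₂` on `M₁ × M₂`. -/
instance Prod.instSMulProdProd : SMul (R₁ × R₂) (M₁ × M₂) :=
  ⟨fun p m => (p.1 • m.1, p.2 • m.2)⟩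

/-- `M₁ × M₂` is a module over `R₁ × R₂` componentwise. -/
instance Prod.instModuleProdProd : Module (R₁ × R₂) (M₁ × M₂) where
  one_smul m := Prod.ext (one_smul _ _) (one_smul _ _)
  mul_smul p q m := Prod.ext (mul_smul _ _ _) (mul_smul _ _ _)
  smul_zero p := Prod.ext (smul_zero _) (smul_zero _)
  smul_add p m n := Prod.ext (smul_add _ _ _) (smul_add _ _ _)
  add_smul p q m := Prod.ext (add_smul _ _ _) (add_smul _ _ _)
  zero_smul m := Prod.ext (zero_smul _ _) (zero_smul _ _)

/-- The product `P₁ × P₂` of submodules, as a submodule of the `R₁ × R₂`-module `M₁ × M₂`. -/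
def Submodule.prodProd (P₁ : Submodule R₁ M₁) (P₂ : Submodule R₂ M₂) :
    Submodule (R₁ × R₂) (M₁ × M₂) where
  carrier := (P₁ : Set M₁) ×ˢ (P₂ : Set M₂)
  add_mem' h h' := ⟨P₁.add_mem h.1 h'.1, P₂.add_mem h.2 h'.2⟩
  zero_mem' := ⟨P₁.zero_mem, P₂.zero_mem⟩
  smul_mem' c x h := ⟨P₁.smul_mem c.1 h.1, P₂.smul_mem c.2 h.2⟩

end ProdModule

/-- `P` is a classical `S`-primary submodule relative to the sets `hA`, `hN` of homogeneous
elements; this includes `(P :_A N) ∩ S = ∅`. -/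
def IsClSPrimaryOn {A N : Type*} [CommRing A] [AddCommGroup N] [Module A N]
    (hA : Set A) (hN : Set N) (S : Submonoid A) (P : Submodule A N) : Prop :=
  Disjoint ((P.colon ⊤ : Ideal A) : Set A) (S : Set A) ∧
    ∃ s ∈ S, ∀ x ∈ hA, ∀ y ∈ hA, ∀ m ∈ hN, (x * y) • m ∈ P →
      (s * x) • m ∈ P ∨ ∃ n : ℕ, 0 < n ∧ (s * y ^ n) • m ∈ P

variable {G : Type*} [AddCommGroup G] [DecidableEq G]
variable {R₁ : Type*} [CommRing R₁] (𝒜₁ : G → AddSubmonoid R₁) [GradedRing 𝒜₁]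
variable {R₂ : Type*} [CommRing R₂] (𝒜₂ : G → AddSubmonoid R₂) [GradedRing 𝒜₂]
variable {M₁ : Type*} [AddCommGroup M₁] [Module R₁ M₁]
variable (ℳ₁ : G → AddSubmonoid M₁) [SetLike.GradedSMul 𝒜₁ ℳ₁] [DirectSum.Decomposition ℳ₁]
variable {M₂ : Type*} [AddCommGroup M₂] [Module R₂ M₂]
variable (ℳ₂ : G → AddSubmonoid M₂) [SetLike.GradedSMul 𝒜₂ ℳ₂] [DirectSum.Decomposition ℳ₂]

/-- `P` is a graded submodule. -/
def IsGradedSubmodule {R M : Type*} [CommRing R] [AddCommGroup M] [Module R M]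
    (ℳ : G → AddSubmonoid M) [DirectSum.Decomposition ℳ] (P : Submodule R M) : Prop :=
  ∀ m ∈ P, ∀ g : G, (DirectSum.decompose ℳ m g : M) ∈ P

/-! The second factor carries no information. The colon ideal of `P₁ × M₂` is
`(P₁ : M₁) × R₂`, so it meets `S₁ × S₂` exactly when `(P₁ : M₁)` meets `S₁`. A witness `s₁`
for `P₁` gives the witness `(s₁, 1)` for `P₁ × M₂`, and conversely a witness `(s₁, s₂)` for
`P₁ × M₂`, tested on the homogeneous elements `(x, 0)`, `(y, 0)`, `(m, 0)`, shows that `s₁` is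
a witness for `P₁`. -/

section ProdModule

variable {R₁ R₂ M₁ M₂ : Type*} [CommRing R₁] [CommRing R₂]
  [AddCommGroup M₁] [AddCommGroup M₂] [Module R₁ M₁] [Module R₂ M₂]

@[simp]
theorem Prod.fst_smul_prodProd (p : R₁ × R₂) (m : M₁ × M₂) : (p • m).1 = p.1 • m.1 := rfl

@[simp]
theorem Submodule.mem_prodProd {P₁ : Submodule R₁ M₁} {P₂ : Submodule R₂ M₂} {m : M₁ × M₂} :
    m ∈ P₁.prodProd P₂ ↔ m.1 ∈ P₁ ∧ m.2 ∈ P₂ :=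
  Iff.rfl

theorem Submodule.mem_colon_prodProd_top_iff {P₁ : Submodule R₁ M₁} {r : R₁ × R₂} :
    r ∈ (P₁.prodProd (⊤ : Submodule R₂ M₂)).colon ⊤ ↔ r.1 ∈ P₁.colon ⊤ := by
  simp only [Submodule.mem_colon, Submodule.mem_prodProd,
    Submodule.mem_top, and_true, Prod.forall, Prod.fst_smul_prodProd]
  exact ⟨fun h m₁ => h m₁ 0, fun h m₁ _ => h m₁⟩

theorem Submodule.disjoint_colon_prodProd_top_iff (P₁ : Submodule R₁ M₁) (S₁ : Submonoid R₁)
    (S₂ : Submonoid R₂) :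
    Disjoint ((P₁.prodProd (⊤ : Submodule R₂ M₂)).colon ⊤ : Set (R₁ × R₂)) (S₁.prod S₂) ↔
      Disjoint (P₁.colon ⊤ : Set R₁) S₁ := by
  simp only [Set.disjoint_left, SetLike.mem_coe, mem_colon_prodProd_top_iff, Submonoid.mem_prod,
    not_and, Prod.forall]
  exact ⟨fun h r₁ hr hS => h r₁ 1 hr hS (one_mem S₂), fun h r₁ _ hr hS _ => h hr hS⟩

variable {A₁ : Set R₁} {N₁ : Set M₁} {A : Set (R₁ × R₂)} {N : Set (M₁ × M₂)}

theorem isClSPrimaryOn_prodProd_top_iff (hA_fst : Set.MapsTo Prod.fst A A₁)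
    (hA_mk_zero : Set.MapsTo (fun x => (x, 0)) A₁ A) (hN_fst : Set.MapsTo Prod.fst N N₁)
    (hN_mk_zero : Set.MapsTo (fun m => (m, 0)) N₁ N) (S₁ : Submonoid R₁) (S₂ : Submonoid R₂)
    (P₁ : Submodule R₁ M₁) :
    IsClSPrimaryOn A N (S₁.prod S₂) (P₁.prodProd ⊤) ↔ IsClSPrimaryOn A₁ N₁ S₁ P₁ := by
  unfold IsClSPrimaryOn
  rw [Submodule.disjoint_colon_prodProd_top_iff]
  refine and_congr_right fun _ => ⟨?_, ?_⟩
  · rintro ⟨s, hs, hprim⟩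
    refine ⟨s.1, hs.1, fun x hx y hy m hm hxym => ?_⟩
    obtain h | ⟨n, hn, h⟩ :=
      hprim (x, 0) (hA_mk_zero hx) (y, 0) (hA_mk_zero hy) (m, 0) (hN_mk_zero hm) ⟨hxym, trivial⟩
    · exact Or.inl h.1
    · exact Or.inr ⟨n, hn, by simpa using h.1⟩
  · rintro ⟨s, hs, hprim⟩
    refine ⟨(s, 1), ⟨hs, one_mem S₂⟩, fun x hx y hy m hm hxym => ?_⟩
    obtain h | ⟨n, hn, h⟩ := hprim x.1 (hA_fst hx) y.1 (hA_fst hy) m.1 (hN_fst hm) hxym.1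
    · exact Or.inl ⟨h, trivial⟩
    · exact Or.inr ⟨n, hn, by simpa using h, trivial⟩

end ProdModule

namespace SetLike

variable {ι α β σ τ : Type*} [SetLike σ α] [SetLike τ β] (𝒜 : ι → σ) (ℬ : ι → τ)

theorem mapsTo_fst_setOf_homogeneous_pair :
    Set.MapsTo Prod.fst {p : α × β | ∃ i, p.1 ∈ 𝒜 i ∧ p.2 ∈ ℬ i} {a | IsHomogeneousElem 𝒜 a} :=
  fun _ ⟨i, h₁, _⟩ => ⟨i, h₁⟩

theorem mapsTo_mk_zero_setOf_homogeneous_pair [Zero β] [ZeroMemClass τ β] :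
    Set.MapsTo (fun a => (a, 0)) {a | IsHomogeneousElem 𝒜 a}
      {p : α × β | ∃ i, p.1 ∈ 𝒜 i ∧ p.2 ∈ ℬ i} :=
  fun _ ⟨i, hi⟩ => ⟨i, hi, zero_mem _⟩

end SetLike

theorem prodTop_isClSPrimary_iff (S₁ : Submonoid R₁) (S₂ : Submonoid R₂)
    (P₁ : Submodule R₁ M₁) :
    IsClSPrimaryOn {r | SetLike.IsHomogeneousElem 𝒜₁ r} {m | SetLike.IsHomogeneousElem ℳ₁ m} S₁ P₁ ↔
      IsClSPrimaryOn {p : R₁ × R₂ | ∃ g : G, p.1 ∈ 𝒜₁ g ∧ p.2 ∈ 𝒜₂ g}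
        {m : M₁ × M₂ | ∃ g : G, m.1 ∈ ℳ₁ g ∧ m.2 ∈ ℳ₂ g}
        (S₁.prod S₂) (P₁.prodProd (⊤ : Submodule R₂ M₂)) :=
  (isClSPrimaryOn_prodProd_top_iff (SetLike.mapsTo_fst_setOf_homogeneous_pair 𝒜₁ 𝒜₂)
    (SetLike.mapsTo_mk_zero_setOf_homogeneous_pair 𝒜₁ 𝒜₂)
    (SetLike.mapsTo_fst_setOf_homogeneous_pair ℳ₁ ℳ₂)
    (SetLike.mapsTo_mk_zero_setOf_homogeneous_pair ℳ₁ ℳ₂) S₁ S₂ P₁).symm
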